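/- arXiv:0903.4692 — 3 statements merged into one kernel-verified Lean document; each statement's English description precedes it below -/
import Mathlib

section
/- Let V be an even lattice, σ an isometry of V, and c ∈ V a root (⟨c,c⟩ = −2). As ℤ[[t]]-linear endomorphisms of V[[t]] := ℤ[[t]] ⊗ V, one has the identity (id − t·s_c∘σ^{-1}) ∘ (Σ_{k≥0} t^k σ^{-k}) = id − Σ_{k≥1} t^k ⟨·, σ^k(c)⟩ c. In particular, writing h for this operator, h(v) ∈ v + ℤ[[t]]·c for every v ∈ V. -/
/-- The reflection `s_c(v) = v + ⟨v,c⟩c` in a root `c`. -/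
def sRefl {V : Type*} [AddCommGroup V] [Module ℤ V]
    (B : V →ₗ[ℤ] V →ₗ[ℤ] ℤ) (c x : V) : V :=
  x + B x c • c

section Isometry

variable {R V : Type*} [CommRing R] [AddCommGroup V] [Module R V]
  (B : V →ₗ[R] V →ₗ[R] R) (σ : V ≃ₗ[R] V)

theorem LinearEquiv.pow_apply_inv_pow_apply (k : ℕ) (x : V) : (σ ^ k) ((σ⁻¹ ^ k) x) = x := by
  rw [inv_pow]
  exact (σ ^ k).apply_symm_apply x

variable {B σ}

theorem isometry_pow (hσ : ∀ x y, B (σ x) (σ y) = B x y) (k : ℕ) (x y : V) :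
    B ((σ ^ k) x) ((σ ^ k) y) = B x y := by
  induction k generalizing x y with
  | zero => rfl
  | succ n ih => rw [pow_succ, LinearEquiv.mul_apply, LinearEquiv.mul_apply, ih, hσ]

theorem isometry_inv_pow_apply_left (hσ : ∀ x y, B (σ x) (σ y) = B x y) (k : ℕ) (x y : V) :
    B ((σ⁻¹ ^ k) x) y = B x ((σ ^ k) y) := by
  rw [← isometry_pow hσ k, σ.pow_apply_inv_pow_apply]

end Isometry

theorem sub_sRefl {V : Type*} [AddCommGroup V] [Module ℤ V] (B : V →ₗ[ℤ] V →ₗ[ℤ] ℤ) (c x : V) :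
    x - sRefl B c x = -(B x c) • c := by
  rw [sRefl, sub_add_cancel_left, neg_zsmul]

theorem stmt6_general {V : Type*} [AddCommGroup V] [Module ℤ V]
    (B : V →ₗ[ℤ] V →ₗ[ℤ] ℤ)
    (σ : V ≃ₗ[ℤ] V) (hσ : ∀ x y, B (σ x) (σ y) = B x y)
    (c : V) :
    ∀ v : V,
      (∀ k : ℕ, 1 ≤ k →
        (σ⁻¹ ^ k) v - sRefl B c ((σ⁻¹ ^ k) v) = -(B v ((σ ^ k) c)) • c) ∧
      (∀ k : ℕ, ∃ m : ℤ,
        ((σ⁻¹ ^ k) v - (if k = 0 then 0 else sRefl B c ((σ⁻¹ ^ k) v)))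
          = (if k = 0 then v else 0) + m • c) := by
  intro v
  have coeff (k : ℕ) : (σ⁻¹ ^ k) v - sRefl B c ((σ⁻¹ ^ k) v) = -(B v ((σ ^ k) c)) • c := by
    rw [sub_sRefl, isometry_inv_pow_apply_left hσ]
  refine ⟨fun k _ => coeff k, fun k => ?_⟩
  rcases Nat.eq_zero_or_pos k with rfl | hk
  · exact ⟨0, by simp⟩
  · exact ⟨-(B v ((σ ^ k) c)), by rw [if_neg hk.ne', if_neg hk.ne', coeff k, zero_add]⟩

/-- for an isometry `σ` of an even lattice `V` and a root `c`, the
ℤ[[t]]-linear operator identity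
`(id − t·s_c∘σ⁻¹) ∘ (Σ_{k≥0} t^k σ^{-k}) = id − Σ_{k≥1} t^k ⟨·, σ^k(c)⟩ c`
on `V[[t]] = ℤ[[t]] ⊗ V` holds; both sides are ℤ[[t]]-linear, so this is
equivalent to the identity of the coefficient sequences of the images of all
`v ∈ V`: the `t^k`-coefficient of the left-hand side applied to `v` is
`σ^{-k}(v) − s_c(σ^{-k}(v))` for `k ≥ 1` (and `v` for `k = 0`), and this equals
`−⟨v, σ^k(c)⟩ c`. In particular `h(v) ∈ v + ℤ[[t]]·c` for every `v ∈ V`. -/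
theorem stmt6 {V : Type*} [AddCommGroup V] [Module ℤ V]
    [Module.Free ℤ V] [Module.Finite ℤ V]
    (B : V →ₗ[ℤ] V →ₗ[ℤ] ℤ)
    (hsymm : ∀ x y, B x y = B y x)
    (heven : ∀ x, Even (B x x))
    (σ : V ≃ₗ[ℤ] V) (hσ : ∀ x y, B (σ x) (σ y) = B x y)
    (c : V) (hc : B c c = -2) :
    ∀ v : V,
      (∀ k : ℕ, 1 ≤ k →
        (σ⁻¹ ^ k) v - sRefl B c ((σ⁻¹ ^ k) v) = -(B v ((σ ^ k) c)) • c) ∧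
      (∀ k : ℕ, ∃ m : ℤ,
        ((σ⁻¹ ^ k) v - (if k = 0 then 0 else sRefl B c ((σ⁻¹ ^ k) v)))
          = (if k = 0 then v else 0) + m • c) :=
  stmt6_general B σ hσ c
end

section
/- Let V be an even lattice, σ an isometry of V, and c ∈ V a root (⟨c,c⟩ = −2). Then in ℤ[[t]] one has det(id − t·(σ∘s_c)^{-1}) = det(id − t·σ^{-1}) · (1 − Σ_{k≥1} ⟨c, σ^k(c)⟩ t^k), where both determinants are taken of ℤ[[t]]-linear endomorphisms of ℤ[[t]] ⊗ V (equivalently, the left-hand factors are the reversed characteristic polynomials of (σ∘s_c)^{-1} and σ^{-1}). -/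
/-- The determinant of the endomorphism `id − t·f` of `ℤ[[t]] ⊗ V`, i.e. the
reversed characteristic polynomial of `f`, computed via the matrix of `f`
in the basis `b`, as an element of `ℤ[[t]]`. -/
noncomputable def detOneSubT {ι V : Type*} [Fintype ι] [DecidableEq ι]
    [AddCommGroup V] [Module ℤ V] (b : Module.Basis ι ℤ V) (f : V →ₗ[ℤ] V) :
    PowerSeries ℤ :=
  Matrix.det
    (1 - (PowerSeries.X : PowerSeries ℤ) •
      (LinearMap.toMatrix b b f).map (PowerSeries.C (R := ℤ)))

/-!
Since `c` is a root, `s_c` is an involution and `τ⁻¹ = s_c ∘ σ⁻¹ = σ⁻¹ + c ⊗ ⟨-, σ c⟩` is a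
rank-one perturbation of `σ⁻¹`. By the matrix determinant lemma,
`det(1 - t(A + w rᵀ)) = det(1 - tA) · (1 - t rᵀ (1 - tA)⁻¹ w)`, and over `ℤ[[t]]` the inverse
`(1 - tA)⁻¹` is the geometric series `∑ Aᵏ tᵏ`. With `A` the matrix of `σ⁻¹` the coefficients
are `⟨σ⁻ᵏ c, σ c⟩ = ⟨c, σᵏ⁺¹ c⟩`.
-/

open PowerSeries Matrix

namespace Matrix

variable {ι R : Type*} [Fintype ι] [DecidableEq ι] [CommRing R]

noncomputable def geomSeries (A : Matrix ι ι R) : Matrix ι ι R⟦X⟧ :=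
  of fun i j => mk fun k => (A ^ k) i j

theorem one_sub_X_smul_map_C_mul_geomSeries (A : Matrix ι ι R) :
    (1 - (X : R⟦X⟧) • A.map C) * geomSeries A = 1 := by
  have hshift : A.map C * geomSeries A = of fun i j => mk fun k => (A ^ (k + 1)) i j := by
    ext i j n
    simp [geomSeries, mul_apply, map_sum, coeff_C_mul, pow_succ']
  rw [Matrix.sub_mul, Matrix.one_mul, Matrix.smul_mul, hshift]
  ext i j (_ | n)
  · simp [geomSeries, one_apply, apply_ite (coeff (R := R) 0)]
  · simp [geomSeries, coeff_succ_X_mul, one_apply, apply_ite (coeff (R := R) (n + 1))]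

theorem dotProduct_geomSeries_mulVec (A : Matrix ι ι R) (w r : ι → R) :
    (C ∘ r) ⬝ᵥ (geomSeries A *ᵥ (C ∘ w)) = mk fun n => r ⬝ᵥ (A ^ n *ᵥ w) := by
  ext n
  simp [geomSeries, dotProduct, mulVec, map_sum, coeff_C_mul, coeff_mul_C]

theorem det_one_sub_X_smul_add_vecMulVec (A : Matrix ι ι R) (w r : ι → R) :
    det (1 - (X : R⟦X⟧) • (A + vecMulVec w r).map C) =
      det (1 - (X : R⟦X⟧) • A.map C) * (1 - X * mk fun n => r ⬝ᵥ (A ^ n *ᵥ w)) := by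
  have hmap : (A + vecMulVec w r).map C = A.map C + vecMulVec (C ∘ w) (C ∘ r) := by
    ext; simp [vecMulVec_apply]
  have hfactor : 1 - (X : R⟦X⟧) • (A + vecMulVec w r).map C =
      (1 - (X : R⟦X⟧) • A.map C) *
        (1 + vecMulVec (-(geomSeries A *ᵥ ((X : R⟦X⟧) • (C ∘ w)))) (C ∘ r)) := by
    rw [Matrix.mul_add, Matrix.mul_one, mul_vecMulVec, mulVec_neg, mulVec_mulVec,
      one_sub_X_smul_map_C_mul_geomSeries, one_mulVec, hmap, smul_add, ← smul_vecMulVec,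
      neg_vecMulVec]
    abel
  rw [hfactor, det_mul, vecMulVec_eq Unit, det_one_add_replicateCol_mul_replicateRow,
    dotProduct_neg, mulVec_smul, dotProduct_smul, dotProduct_geomSeries_mulVec, smul_eq_mul,
    ← sub_eq_add_neg]

end Matrix

theorem LinearMap.toMatrix_toSpanSingleton_comp {ι R M : Type*} [Fintype ι] [DecidableEq ι]
    [CommRing R] [AddCommGroup M] [Module R M] (b : Module.Basis ι R M) (φ : M →ₗ[R] R) (c : M) :
    toMatrix b b (toSpanSingleton R M c ∘ₗ φ) = vecMulVec (b.repr c) (φ ∘ b) := by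
  ext i j
  simp [toMatrix_apply, vecMulVec_apply, mul_comm]

theorem detOneSubT_add_toSpanSingleton_comp {ι V : Type*} [Fintype ι] [DecidableEq ι]
    [AddCommGroup V] [Module ℤ V] (b : Module.Basis ι ℤ V) (f : V →ₗ[ℤ] V) (φ : V →ₗ[ℤ] ℤ)
    (c : V) :
    detOneSubT b (f + LinearMap.toSpanSingleton ℤ V c ∘ₗ φ) =
      detOneSubT b f * (1 - X * mk fun n => φ ((f ^ n) c)) := by
  rw [detOneSubT, detOneSubT, map_add, LinearMap.toMatrix_toSpanSingleton_comp,
    det_one_sub_X_smul_add_vecMulVec]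
  congr 4 with n
  rw [LinearMap.toMatrix_pow, LinearMap.toMatrix_mulVec_repr]
  conv_rhs => rw [← b.sum_repr ((f ^ n) c), map_sum]
  simp only [dotProduct, Function.comp_apply, map_smul, smul_eq_mul, mul_comm]

namespace LinearMap.IsOrthogonal

variable {R V : Type*} [CommRing R] [AddCommGroup V] [Module R V] {B : V →ₗ[R] V →ₗ[R] R}
  {σ : V ≃ₗ[R] V}

theorem pow (hσ : B.IsOrthogonal σ) (n : ℕ) : B.IsOrthogonal ⇑(σ ^ n) := by
  induction n with
  | zero => exact fun _ _ => rfl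
  | succ n ih =>
    intro x y
    rw [pow_succ', LinearEquiv.mul_apply, LinearEquiv.mul_apply, hσ, ih]

theorem apply_symm_left (hσ : B.IsOrthogonal σ) (x y : V) : B (σ.symm x) y = B x (σ y) := by
  rw [← hσ, σ.apply_symm_apply]

theorem inv_comp_reflection_eq (hσ : B.IsOrthogonal σ) {c : V} (hc : B c c = -2)
    {τ : V ≃ₗ[R] V} (hτ : ∀ x, τ x = σ (x + B x c • c)) :
    (τ⁻¹ : V ≃ₗ[R] V).toLinearMap =
      (σ⁻¹ : V ≃ₗ[R] V).toLinearMap + toSpanSingleton R V c ∘ₗ B.flip (σ c) := by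
  ext x
  simp only [add_apply, comp_apply, LinearEquiv.coe_coe, LinearEquiv.coe_inv, flip_apply,
    toSpanSingleton_apply, LinearEquiv.symm_apply_eq, hτ, map_add, map_smul, smul_apply,
    hσ.apply_symm_left, hc]
  rw [σ.apply_symm_apply]
  module

end LinearMap.IsOrthogonal

theorem stmt7_general {ι V : Type*} [Fintype ι] [DecidableEq ι]
    [AddCommGroup V] [Module ℤ V]
    (b : Module.Basis ι ℤ V)
    (B : V →ₗ[ℤ] V →ₗ[ℤ] ℤ)
    (σ : V ≃ₗ[ℤ] V) (hσ : ∀ x y, B (σ x) (σ y) = B x y)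
    (c : V) (hc : B c c = -2)
    (τ : V ≃ₗ[ℤ] V) (hτ : ∀ x, τ x = σ (x + B x c • c)) :
    detOneSubT b (τ⁻¹ : V ≃ₗ[ℤ] V).toLinearMap
      = detOneSubT b (σ⁻¹ : V ≃ₗ[ℤ] V).toLinearMap *
        PowerSeries.mk (fun k => if k = 0 then 1 else -(B c ((σ ^ k) c))) := by
  -- in `hτ` the scalar action is `zsmul`, not the given `Module ℤ V` structure
  have hτ' : ∀ x, τ x = σ (x + LinearMap.toSpanSingleton ℤ V c (B x c)) := fun x => by
    rw [hτ, LinearMap.toSpanSingleton_apply, ← Int.cast_smul_eq_zsmul ℤ, Int.cast_id]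
  have hσinv_pow (n : ℕ) : ((σ⁻¹ : V ≃ₗ[ℤ] V).toLinearMap ^ n) c = (σ ^ n).symm c := by
    rw [Module.End.pow_apply, ← LinearEquiv.coe_inv, ← inv_pow, LinearEquiv.pow_apply]
    rfl
  rw [LinearMap.IsOrthogonal.inv_comp_reflection_eq hσ hc hτ',
    detOneSubT_add_toSpanSingleton_comp]
  congr 1
  ext (_ | n)
  · simp
  · simp [coeff_succ_X_mul, hσinv_pow, (LinearMap.IsOrthogonal.pow hσ n).apply_symm_left,
      pow_succ]

/-- for an isometry `σ` of an even lattice `V` and a root `c`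
(with reflection `s_c`, and `τ = σ ∘ s_c`), one has in `ℤ[[t]]`:
`det(id − t·(σ∘s_c)⁻¹) = det(id − t·σ⁻¹) · (1 − Σ_{k≥1} ⟨c, σ^k(c)⟩ t^k)`. -/
theorem stmt7 {ι V : Type*} [Fintype ι] [DecidableEq ι]
    [AddCommGroup V] [Module ℤ V]
    (b : Module.Basis ι ℤ V)
    (B : V →ₗ[ℤ] V →ₗ[ℤ] ℤ)
    (hsymm : ∀ x y, B x y = B y x)
    (heven : ∀ x, Even (B x x))
    (σ : V ≃ₗ[ℤ] V) (hσ : ∀ x y, B (σ x) (σ y) = B x y)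
    (c : V) (hc : B c c = -2)
    (τ : V ≃ₗ[ℤ] V) (hτ : ∀ x, τ x = σ (x + B x c • c)) :
    detOneSubT b (τ⁻¹ : V ≃ₗ[ℤ] V).toLinearMap
      = detOneSubT b (σ⁻¹ : V ≃ₗ[ℤ] V).toLinearMap *
        PowerSeries.mk (fun k => if k = 0 then 1 else -(B c ((σ ^ k) c))) :=
  stmt7_general b B σ hσ c hc τ hτ
end

section
/- Let g ≥ 0 and r ≥ 0 be integers and α_1, …, α_r ≥ 2 integers satisfying Σ_{i=1}^{r} 1/α_i < r + 2g − 2 (an inequality of rational numbers). Then for every integer k ≥ 2 one has k(2g−2) + Σ_{i=1}^{r} ⌊k(α_i−1)/α_i⌋ > 2g − 2. -/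
/-- let `g ≥ 0`, `r ≥ 0` be integers and `α_1, …, α_r ≥ 2` integers
satisfying the hyperbolicity condition `Σ_i 1/α_i < r + 2g − 2` (in ℚ). Then for
every integer `k ≥ 2` one has `k(2g−2) + Σ_i ⌊k(α_i−1)/α_i⌋ > 2g − 2`. -/
theorem stmt15 (g : ℤ) (hg : 0 ≤ g) (r : ℕ) (α : Fin r → ℕ)
    (hα : ∀ i, 2 ≤ α i)
    (hhyp : ∑ i : Fin r, (1 : ℚ) / (α i : ℚ) < (r : ℚ) + 2 * (g : ℚ) - 2) :
    ∀ k : ℤ, 2 ≤ k →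
      2 * g - 2 < k * (2 * g - 2) +
        ∑ i : Fin r, ⌊((k : ℚ) * ((α i : ℚ) - 1)) / (α i : ℚ)⌋ := by
  intro k hk
  -- key pointwise bound: ⌊k(α-1)/α⌋ ≥ (k-1)(1 - 1/α) in ℚ
  have key : ∀ i : Fin r, ((k : ℚ) - 1) * (1 - 1 / (α i : ℚ)) ≤
      (⌊((k : ℚ) * ((α i : ℚ) - 1)) / (α i : ℚ)⌋ : ℚ) := by
    intro i
    have hα2 : (2 : ℕ) ≤ α i := hα i
    have hαZ : (2 : ℤ) ≤ (α i : ℤ) := by exact_mod_cast hα2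
    have hαpos : (0 : ℚ) < (α i : ℚ) := by
      have : (0 : ℕ) < α i := by omega
      exact_mod_cast this
    have hfl : ⌊((k : ℚ) * ((α i : ℚ) - 1)) / (α i : ℚ)⌋
        = (k * ((α i : ℤ) - 1)) / (α i : ℤ) := by
      rw [show ((k : ℚ) * ((α i : ℚ) - 1)) = ((k * ((α i : ℤ) - 1) : ℤ) : ℚ) by push_cast; ring]
      exact Rat.floor_intCast_div_natCast _ _
    rw [hfl]
    set n : ℤ := k * ((α i : ℤ) - 1) with hn
    set a : ℤ := (α i : ℤ) with ha
    have hapos : (0 : ℤ) < a := by omega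
    have hdm := Int.mul_ediv_add_emod n a
    have hmod : n % a ≤ a - 1 := by
      have := Int.emod_lt_of_pos n hapos
      omega
    -- so a * (n / a) ≥ n - (a - 1) = (k-1)(a-1)
    have h1 : (k - 1) * (a - 1) ≤ a * (n / a) := by
      have : a * (n / a) = n - n % a := by omega
      rw [this, hn]
      nlinarith
    have h1Q : ((k : ℚ) - 1) * ((a : ℚ) - 1) ≤ (a : ℚ) * ((n / a : ℤ) : ℚ) := by
      exact_mod_cast h1
    have haQ : (0 : ℚ) < (a : ℚ) := by exact_mod_cast hapos
    have : ((k : ℚ) - 1) * (1 - 1 / (a : ℚ)) ≤ ((n / a : ℤ) : ℚ) := by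
      rw [show ((k:ℚ)-1)*(1-1/(a:ℚ)) = (((k:ℚ)-1)*((a:ℚ)-1))/(a:ℚ) by field_simp,
        div_le_iff₀ haQ]
      nlinarith [h1Q]
    simpa [ha] using this
  have hsum : ((k : ℚ) - 1) * ((r : ℚ) - ∑ i : Fin r, (1 : ℚ) / (α i : ℚ)) ≤
      ∑ i : Fin r, (⌊((k : ℚ) * ((α i : ℚ) - 1)) / (α i : ℚ)⌋ : ℚ) := by
    calc ((k : ℚ) - 1) * ((r : ℚ) - ∑ i : Fin r, (1 : ℚ) / (α i : ℚ))
        = ∑ i : Fin r, ((k : ℚ) - 1) * (1 - 1 / (α i : ℚ)) := by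
          rw [← Finset.mul_sum]
          congr 1
          rw [Finset.sum_sub_distrib]
          simp
      _ ≤ _ := Finset.sum_le_sum fun i _ => key i
  -- now conclude in ℚ
  have goalQ : (2 * (g : ℚ) - 2) < (k : ℚ) * (2 * (g : ℚ) - 2) +
      ∑ i : Fin r, (⌊((k : ℚ) * ((α i : ℚ) - 1)) / (α i : ℚ)⌋ : ℚ) := by
    have hk1 : (1 : ℚ) ≤ (k : ℚ) - 1 := by
      have : (2 : ℤ) ≤ k := hk
      have : (2 : ℚ) ≤ (k : ℚ) := by exact_mod_cast this
      linarith
    have hbr : (0 : ℚ) < 2 * (g : ℚ) - 2 + ((r : ℚ) - ∑ i : Fin r, (1 : ℚ) / (α i : ℚ)) := by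
      linarith
    have hgQ : (0 : ℚ) ≤ (g : ℚ) := by exact_mod_cast hg
    nlinarith [hsum, hbr, hk1]
  have := goalQ
  push_cast at this
  exact_mod_cast this
end
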